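/- arXiv:1402.2367 — 2 statements merged into one kernel-verified Lean document; each statement's English description precedes it below -/
import Mathlib

section
/- For every positive integer n and every real x > 0, the n-th derivative of the function x ↦ e^{-1/x} equals (-1)^n e^{-1/x} ∑_{k=1}^{n} (-1)^k L(n,k) x^{-(n+k)}. -/
open Finset

/-- Lah numbers: `L(n,k) = C(n-1,k-1) * n! / k!` (as a real number). -/
noncomputable def lah (n k : ℕ) : ℝ :=
  ((n - 1).choose (k - 1) : ℝ) * (Nat.factorial n) / (Nat.factorial k)

/-!
On `(0, ∞)` the function `e^{-1/x}` agrees with `expNegInvGlue`, and differentiating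
`p(1/x) e^{-1/x}` gives `q(1/x) e^{-1/x}` with `q = X² (p - p')`. Hence the `n`-th derivative is
`qₙ(1/x) e^{-1/x}`, where `qₙ` is the `n`-th iterate of `p ↦ X² (p - p')` applied to `1`. The Lah
recurrence `L(n+1,k) = L(n,k-1) + (n+k) L(n,k)` is exactly what identifies
`qₙ = ∑ₖ (-1)^(n+k) L(n,k) X^(n+k)`.
-/

open Polynomial
open scoped Nat

theorem lah_one (n : ℕ) : lah n 1 = n ! := by simp [lah]

theorem lah_eq_zero_of_lt {n k : ℕ} (hn : n ≠ 0) (h : n < k) : lah n k = 0 := by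
  simp [lah, Nat.choose_eq_zero_of_lt (by omega : n - 1 < k - 1)]

theorem add_two_mul_choose_succ_succ (m i : ℕ) :
    (m + 2) * (m + 1).choose (i + 1) = (m + i + 3) * m.choose (i + 1) + (i + 2) * m.choose i := by
  rw [Nat.choose_succ_succ']
  rcases le_or_gt i m with hle | hlt
  · have h := Nat.choose_succ_right_eq m i
    zify [hle] at h ⊢
    linear_combination -h
  · simp [Nat.choose_eq_zero_of_lt hlt, Nat.choose_eq_zero_of_lt (by omega : m < i + 1)]

-- Stated for `k + 2` because `lah n 0 = n!` rather than `0`.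
theorem lah_succ_add_two {n : ℕ} (hn : n ≠ 0) (k : ℕ) :
    lah (n + 1) (k + 2) = lah n (k + 1) + (n + k + 2) * lah n (k + 2) := by
  obtain ⟨m, rfl⟩ := Nat.exists_eq_add_one_of_ne_zero hn
  have hchoose : ((m + 2) * (m + 1).choose (k + 1) : ℝ) =
      (m + k + 3) * m.choose (k + 1) + (k + 2) * m.choose k := by
    exact_mod_cast add_two_mul_choose_succ_succ m k
  simp only [lah, Nat.add_sub_cancel, Nat.factorial_succ,
    show k + 2 - 1 = k + 1 by omega]
  push_cast
  field_simp
  linear_combination hchoose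

noncomputable def lahPoly (n : ℕ) : ℝ[X] :=
  ∑ k ∈ Icc 1 n, C ((-1) ^ (n + k) * lah n k) * X ^ (n + k)

theorem lahPoly_eq_sum_range (n : ℕ) :
    lahPoly n = ∑ j ∈ range n, C ((-1) ^ (n + j + 1) * lah n (j + 1)) * X ^ (n + j + 1) := by
  rw [lahPoly, ← Finset.Ico_add_one_right_eq_Icc, sum_Ico_eq_sum_range, Nat.add_sub_cancel]
  exact sum_congr rfl fun j _ ↦ by rw [add_comm 1 j, ← add_assoc]

namespace expNegInvGlue

noncomputable def derivPoly (p : ℝ[X]) : ℝ[X] := X ^ 2 * (p - derivative p)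

theorem iteratedDeriv_polynomial_eval_inv_mul (p : ℝ[X]) (n : ℕ) :
    iteratedDeriv n (fun x ↦ p.eval x⁻¹ * expNegInvGlue x) =
      fun x ↦ (derivPoly^[n] p).eval x⁻¹ * expNegInvGlue x := by
  induction n generalizing p with
  | zero => simp
  | succ n ih =>
    rw [iteratedDeriv_succ', Function.iterate_succ_apply, ← ih]
    congr 1
    funext x
    exact (hasDerivAt_polynomial_eval_inv_mul p x).deriv

end expNegInvGlue

theorem lahPoly_succ {n : ℕ} (hn : n ≠ 0) :
    lahPoly (n + 1) = expNegInvGlue.derivPoly (lahPoly n) := by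
  set a : ℕ → ℝ := fun j ↦ (-1) ^ (n + j + 1) * lah n (j + 1) with ha
  have hX2 : X ^ 2 * lahPoly n = ∑ j ∈ range n, C (a j) * X ^ (n + 1 + (j + 1) + 1) := by
    rw [lahPoly_eq_sum_range, mul_sum]
    exact sum_congr rfl fun j _ ↦ by ring
  have hder : X ^ 2 * derivative (lahPoly n) =
      ∑ j ∈ range (n + 1), C (a j * (n + j + 1)) * X ^ (n + 1 + j + 1) := by
    have htop : a n = 0 := by simp [ha, lah_eq_zero_of_lt hn n.lt_succ_self]
    rw [sum_range_succ, htop, zero_mul, C_0, zero_mul, add_zero, lahPoly_eq_sum_range,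
      derivative_sum, mul_sum]
    simp only [derivative_C_mul_X_pow]
    refine sum_congr rfl fun j _ ↦ ?_
    rw [show n + j + 1 - 1 = n + j by omega]
    push_cast
    ring
  rw [expNegInvGlue.derivPoly, mul_sub, hX2, hder, sum_range_succ', lahPoly_eq_sum_range,
    sum_range_succ']
  have hcoeff (j : ℕ) : (-1) ^ (n + 1 + (j + 1) + 1) * lah (n + 1) (j + 1 + 1) =
      a j - a (j + 1) * (n + (j + 1 : ℕ) + 1) := by
    simp only [ha, lah_succ_add_two hn]
    push_cast
    ring
  have hone : (-1) ^ (n + 1 + 0 + 1) * lah (n + 1) (0 + 1) = -(a 0 * (n + (0 : ℕ) + 1)) := by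
    simp only [ha, zero_add, lah_one, Nat.factorial_succ]
    push_cast
    ring
  simp only [hcoeff, hone, C_sub, C_neg, sub_mul, neg_mul, sum_sub_distrib]
  ring

theorem derivPoly_iterate_one {n : ℕ} (hn : n ≠ 0) :
    expNegInvGlue.derivPoly^[n] 1 = lahPoly n := by
  obtain ⟨m, rfl⟩ := Nat.exists_eq_add_one_of_ne_zero hn
  induction m with
  | zero => simp [expNegInvGlue.derivPoly, lahPoly, lah]
  | succ m ih => rw [Function.iterate_succ_apply', ih m.succ_ne_zero, lahPoly_succ m.succ_ne_zero]

open Topology in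
theorem iteratedDeriv_exp_neg_inv_eq_lah_sum (n : ℕ) (hn : 1 ≤ n) (x : ℝ) (hx : 0 < x) :
    iteratedDeriv n (fun y : ℝ => Real.exp (-(1 / y))) x
      = (-1 : ℝ) ^ n * Real.exp (-(1 / x)) *
        ∑ k ∈ Finset.Icc 1 n, (-1 : ℝ) ^ k * lah n k / x ^ (n + k) := by
  have hglue : (fun y : ℝ => Real.exp (-(1 / y))) =ᶠ[𝓝 x]
      fun y ↦ (1 : ℝ[X]).eval y⁻¹ * expNegInvGlue y := by
    filter_upwards [lt_mem_nhds hx] with y hy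
    simp [expNegInvGlue, hy.not_ge]
  rw [hglue.iteratedDeriv_eq, expNegInvGlue.iteratedDeriv_polynomial_eval_inv_mul,
    derivPoly_iterate_one (by omega)]
  simp only [lahPoly, eval_finsetSum, expNegInvGlue, hx.not_ge, if_false, eval_mul, eval_C,
    eval_pow, eval_X, one_div, mul_sum, sum_mul]
  refine sum_congr rfl fun k _ ↦ ?_
  ring
end

section
/- For all positive integers m ≤ n and every real x > 0, ∑_{k=m}^{n} L(n,k) (k!/(k-m)!) x^{k-m} = ∫_0^∞ (∑_{j=0}^∞ t^j/(j!(j+1)!)) t^n · (d^m/dx^m)(e^{-x-t/x}/x^n) dt, i.e., the m-th derivative with respect to x of both sides of the integral representation of ∑_{k=1}^n L(n,k)x^k agree. -/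
/-!
For fixed `t`, every `y`-derivative of `e^{-y-t/y}/y^n` is a finite linear combination of the
functions `t^a e^{-y-t/y}/y^b`, closed as they are under `∂/∂y`. For `y` near `x` each of them is
bounded by `C t^a e^{-t/(2x)}`, whereas `∑ t^j/(j!(j+1)!) ≤ e^{1/ε} e^{εt}` for every `ε > 0`, so
dominated convergence lets us differentiate under the integral sign as often as we like, and it
suffices to treat `m = 0`. There, integrating the series termwise with
`∫ t^k e^{-t/x} dt = k! x^{k+1}` gives `e^{-x} ∑_j n! C(j+n,n) x^{j+1}/(j+1)!`, and Vandermonde's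
identity `C(j+n,n) = ∑_k C(j+1,k) C(n-1,k-1)` together with `∑_N C(N,k) x^N/N! = x^k e^x/k!`
turns this into `∑_k L(n,k) x^k`.
-/

open MeasureTheory Real Finset

open scoped Nat Topology

noncomputable def besselSeries (t : ℝ) : ℝ :=
  ∑' j : ℕ, t ^ j / ((Nat.factorial j : ℝ) * (Nat.factorial (j + 1)))

noncomputable def expKernel (n : ℕ) (t y : ℝ) : ℝ :=
  exp (-y - t / y) / y ^ n

noncomputable def kernelMonomial (a b : ℕ) : ℝ → ℝ → ℝ :=
  fun t y => t ^ a * expKernel b t y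

noncomputable def kernelSpan : Submodule ℝ (ℝ → ℝ → ℝ) :=
  Submodule.span ℝ (Set.range fun p : ℕ × ℕ => kernelMonomial p.1 p.2)

lemma kernelMonomial_mem_kernelSpan (a b : ℕ) : kernelMonomial a b ∈ kernelSpan :=
  Submodule.subset_span ⟨(a, b), rfl⟩

lemma hasDerivAt_expKernel (n : ℕ) (t : ℝ) {y : ℝ} (hy : y ≠ 0) :
    HasDerivAt (expKernel n t)
      (-expKernel n t y - n * expKernel (n + 1) t y + t * expKernel (n + 2) t y) y := by
  have hneg : HasDerivAt (fun y : ℝ => -y) (-1) y := (hasDerivAt_id y).neg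
  have hdiv : HasDerivAt (fun y : ℝ => t / y) (t * -(y ^ 2)⁻¹) y := by
    simpa only [div_eq_mul_inv] using (hasDerivAt_inv hy).const_mul t
  have hexp := (hneg.fun_sub hdiv).exp.fun_div (hasDerivAt_pow n y) (pow_ne_zero n hy)
  refine hexp.congr_deriv ?_
  show _ = -(exp (-y - t / y) / y ^ n) - n * (exp (-y - t / y) / y ^ (n + 1))
    + t * (exp (-y - t / y) / y ^ (n + 2))
  rcases n with _ | n
  · field_simp
    ring
  · field_simp
    push_cast
    ring

lemma hasDerivAt_kernelMonomial (a b : ℕ) (t : ℝ) {y : ℝ} (hy : y ≠ 0) :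
    HasDerivAt (kernelMonomial a b t)
      ((-kernelMonomial a b - (b : ℝ) • kernelMonomial a (b + 1) + kernelMonomial (a + 1) (b + 2))
        t y) y := by
  refine ((hasDerivAt_expKernel b t hy).const_mul (t ^ a)).congr_deriv ?_
  simp only [kernelMonomial, Pi.add_apply, Pi.sub_apply, Pi.neg_apply, Pi.smul_apply, smul_eq_mul]
  ring

lemma exists_hasDerivAt_of_mem_kernelSpan {F : ℝ → ℝ → ℝ} (hF : F ∈ kernelSpan) :
    ∃ F' ∈ kernelSpan, ∀ t y, y ≠ 0 → HasDerivAt (F t) (F' t y) y := by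
  induction hF using Submodule.span_induction with
  | mem F hF =>
    obtain ⟨⟨a, b⟩, rfl⟩ := hF
    refine ⟨_, ?_, fun t y hy => hasDerivAt_kernelMonomial a b t hy⟩
    exact add_mem (sub_mem (neg_mem (kernelMonomial_mem_kernelSpan a b))
      (Submodule.smul_mem _ _ (kernelMonomial_mem_kernelSpan a (b + 1))))
      (kernelMonomial_mem_kernelSpan (a + 1) (b + 2))
  | zero => exact ⟨0, zero_mem _, fun t y _ => hasDerivAt_const y 0⟩
  | add F G _ _ hF hG =>
    obtain ⟨F', hF'mem, hF'⟩ := hF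
    obtain ⟨G', hG'mem, hG'⟩ := hG
    exact ⟨F' + G', add_mem hF'mem hG'mem, fun t y hy => (hF' t y hy).add (hG' t y hy)⟩
  | smul c F _ hF =>
    obtain ⟨F', hF'mem, hF'⟩ := hF
    exact ⟨c • F', Submodule.smul_mem _ c hF'mem, fun t y hy => (hF' t y hy).const_mul c⟩

def IsKernelCombination (G : ℝ → ℝ → ℝ) : Prop :=
  ∃ F ∈ kernelSpan, ∀ t, Set.EqOn (G t) (F t) {0}ᶜ

lemma isKernelCombination_iteratedDeriv_expKernel (n m : ℕ) :
    IsKernelCombination fun t => iteratedDeriv m (expKernel n t) := by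
  induction m with
  | zero =>
    refine ⟨kernelMonomial 0 n, kernelMonomial_mem_kernelSpan 0 n, fun t y _ => ?_⟩
    simp [kernelMonomial]
  | succ m ih =>
    obtain ⟨F, hF, hFeq⟩ := ih
    obtain ⟨F', hF', hderiv⟩ := exists_hasDerivAt_of_mem_kernelSpan hF
    refine ⟨F', hF', fun t y (hy : y ≠ 0) => ?_⟩
    show iteratedDeriv (m + 1) (expKernel n t) y = F' t y
    have hnhds : iteratedDeriv m (expKernel n t) =ᶠ[𝓝 y] F t :=
      Filter.eventuallyEq_of_mem (isOpen_compl_singleton.mem_nhds hy) (hFeq t)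
    rw [iteratedDeriv_succ, hnhds.deriv_eq, (hderiv t y hy).deriv]

lemma hasDerivAt_iteratedDeriv_expKernel (n m : ℕ) (t : ℝ) {y : ℝ} (hy : y ≠ 0) :
    HasDerivAt (iteratedDeriv m (expKernel n t)) (iteratedDeriv (m + 1) (expKernel n t) y) y := by
  obtain ⟨F, hF, hFeq⟩ := isKernelCombination_iteratedDeriv_expKernel n m
  obtain ⟨F', -, hderiv⟩ := exists_hasDerivAt_of_mem_kernelSpan hF
  have hnhds : iteratedDeriv m (expKernel n t) =ᶠ[𝓝 y] F t :=
    Filter.eventuallyEq_of_mem (isOpen_compl_singleton.mem_nhds hy) (hFeq t)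
  have h := (hderiv t y hy).congr_of_eventuallyEq hnhds
  rwa [iteratedDeriv_succ, h.deriv]

lemma pow_div_factorial_mul_factorial_le {ε t : ℝ} (hε : 0 < ε) (ht : 0 ≤ t) (j : ℕ) :
    t ^ j / ((j ! : ℝ) * (j + 1)!) ≤ exp ε⁻¹ * ((ε * t) ^ j / j !) := by
  calc t ^ j / ((j ! : ℝ) * (j + 1)!) = (ε * t) ^ j / j ! * (ε⁻¹ ^ j / (j + 1)!) := by
        rw [mul_pow, inv_pow]
        field_simp
    _ ≤ (ε * t) ^ j / j ! * (ε⁻¹ ^ j / j !) := by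
        gcongr
        exact Nat.le_succ j
    _ ≤ (ε * t) ^ j / j ! * exp ε⁻¹ := by
        gcongr
        exact pow_div_factorial_le_exp _ (inv_nonneg.mpr hε.le) j
    _ = exp ε⁻¹ * ((ε * t) ^ j / j !) := mul_comm _ _

lemma summable_pow_div_factorial_mul_factorial (t : ℝ) :
    Summable fun j : ℕ => t ^ j / ((Nat.factorial j : ℝ) * (Nat.factorial (j + 1))) := by
  refine (summable_pow_div_factorial |t|).of_norm_bounded fun j => ?_
  rw [norm_div, norm_pow, Real.norm_eq_abs, Real.norm_of_nonneg (by positivity)]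
  gcongr
  exact le_mul_of_one_le_right (by positivity) (by exact_mod_cast (j + 1).factorial_pos)

lemma besselSeries_nonneg {t : ℝ} (ht : 0 ≤ t) : 0 ≤ besselSeries t :=
  tsum_nonneg fun j => by positivity

lemma besselSeries_le {ε t : ℝ} (hε : 0 < ε) (ht : 0 ≤ t) :
    besselSeries t ≤ exp ε⁻¹ * exp (ε * t) := by
  rw [exp_eq_exp_ℝ, ← (NormedSpace.expSeries_div_hasSum_exp (ε * t)).tsum_eq, ← tsum_mul_left,
    ← exp_eq_exp_ℝ]
  exact (summable_pow_div_factorial_mul_factorial t).tsum_le_tsum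
    (pow_div_factorial_mul_factorial_le hε ht) ((summable_pow_div_factorial _).mul_left _)

lemma measurable_besselSeries : Measurable besselSeries := by
  refine measurable_of_tendsto_metrizable (fun N => ?_)
    (tendsto_pi_nhds.mpr fun t =>
      (summable_pow_div_factorial_mul_factorial t).hasSum.tendsto_sum_nat)
  exact Finset.measurable_sum _ fun j _ => (measurable_id.pow_const j).div_const _

lemma integral_pow_mul_exp_neg_mul_Ioi (k : ℕ) {c : ℝ} (hc : 0 < c) :
    ∫ t in Set.Ioi 0, t ^ k * exp (-(c * t)) = k ! / c ^ (k + 1) := by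
  have h := integral_rpow_mul_exp_neg_mul_Ioi (a := k + 1) (by positivity) hc
  simp only [add_sub_cancel_right, rpow_natCast] at h
  rw [h, Gamma_nat_eq_factorial, ← Nat.cast_succ, rpow_natCast, one_div, inv_pow, div_eq_inv_mul]

lemma integrableOn_pow_mul_exp_neg_mul_Ioi (k : ℕ) {c : ℝ} (hc : 0 < c) :
    IntegrableOn (fun t => t ^ k * exp (-(c * t))) (Set.Ioi 0) :=
  .of_integral_ne_zero (by rw [integral_pow_mul_exp_neg_mul_Ioi k hc]; positivity)

lemma integrableOn_besselSeries_mul_pow_mul_exp (k : ℕ) {c : ℝ} (hc : 0 < c) :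
    IntegrableOn (fun t => besselSeries t * (t ^ k * exp (-(c * t)))) (Set.Ioi 0) := by
  refine ((integrableOn_pow_mul_exp_neg_mul_Ioi k (half_pos hc)).const_mul (exp (c / 2)⁻¹)).mono'
    ((measurable_besselSeries.mul (by fun_prop)).aestronglyMeasurable) ?_
  filter_upwards [ae_restrict_mem measurableSet_Ioi] with t (ht : 0 < t)
  rw [Real.norm_of_nonneg (mul_nonneg (besselSeries_nonneg ht.le) (by positivity))]
  calc besselSeries t * (t ^ k * exp (-(c * t)))
      ≤ exp (c / 2)⁻¹ * exp (c / 2 * t) * (t ^ k * exp (-(c * t))) := by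
        gcongr
        exact besselSeries_le (half_pos hc) ht.le
    _ = exp (c / 2)⁻¹ * (t ^ k * exp (-(c / 2 * t))) := by
        have h : exp (c / 2 * t) * exp (-(c * t)) = exp (-(c / 2 * t)) := by
          rw [← exp_add]
          ring_nf
        rw [← h]
        ring

lemma continuous_of_mem_kernelSpan {F : ℝ → ℝ → ℝ} (hF : F ∈ kernelSpan) (y : ℝ) :
    Continuous fun t => F t y := by
  induction hF using Submodule.span_induction with
  | mem F hF =>
    obtain ⟨⟨a, b⟩, rfl⟩ := hF
    simp only [kernelMonomial, expKernel]
    fun_prop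
  | zero => exact continuous_const
  | add F G _ _ hF hG => exact hF.add hG
  | smul c F _ hF => exact hF.const_smul c

lemma ne_zero_of_mem_ball_half {x y : ℝ} (hy : y ∈ Metric.ball x (x / 2)) : y ≠ 0 := by
  rw [Metric.mem_ball, Real.dist_eq, abs_lt] at hy
  linarith

lemma abs_kernelMonomial_le (a b : ℕ) {x t y : ℝ} (ht : 0 ≤ t)
    (hy : y ∈ Metric.ball x (x / 2)) :
    |kernelMonomial a b t y| ≤ (2 / x) ^ b * (t ^ a * exp (-((2 * x)⁻¹ * t))) := by
  rw [Metric.mem_ball, Real.dist_eq, abs_lt] at hy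
  have hx0 : 0 < x := by linarith
  have hy0 : 0 < y := by linarith
  have hexp : exp (-y - t / y) ≤ exp (-((2 * x)⁻¹ * t)) := by
    have : t / (2 * x) ≤ t / y := div_le_div_of_nonneg_left ht hy0 (by linarith)
    rw [exp_le_exp, ← div_eq_inv_mul]
    linarith
  have hpow : (y ^ b)⁻¹ ≤ (2 / x) ^ b := by
    rw [← inv_pow]
    gcongr
    rw [inv_le_comm₀ hy0 (by positivity), inv_div]
    linarith
  rw [abs_of_nonneg (by unfold kernelMonomial expKernel; positivity)]
  calc t ^ a * (exp (-y - t / y) / y ^ b) = (y ^ b)⁻¹ * (t ^ a * exp (-y - t / y)) := by ring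
    _ ≤ (2 / x) ^ b * (t ^ a * exp (-((2 * x)⁻¹ * t))) := by gcongr

lemma exists_integrableOn_bound_of_mem_kernelSpan {F : ℝ → ℝ → ℝ} (hF : F ∈ kernelSpan) (n : ℕ)
    {x : ℝ} (hx : 0 < x) :
    ∃ g : ℝ → ℝ, IntegrableOn (fun t => besselSeries t * t ^ n * g t) (Set.Ioi 0) ∧
      ∀ t ∈ Set.Ioi (0 : ℝ), ∀ y ∈ Metric.ball x (x / 2), |F t y| ≤ g t := by
  induction hF using Submodule.span_induction with
  | mem F hF =>
    obtain ⟨⟨a, b⟩, rfl⟩ := hF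
    refine ⟨fun t => (2 / x) ^ b * (t ^ a * exp (-((2 * x)⁻¹ * t))), ?_,
      fun t ht y hy => abs_kernelMonomial_le a b (le_of_lt ht) hy⟩
    refine IntegrableOn.congr_fun ((integrableOn_besselSeries_mul_pow_mul_exp (n + a)
      (by positivity : 0 < (2 * x)⁻¹)).const_mul ((2 / x) ^ b)) (fun t _ => ?_) measurableSet_Ioi
    ring
  | zero => exact ⟨0, by simp, fun t _ y _ => by simp⟩
  | add F G _ _ hF hG =>
    obtain ⟨g, hg, hFg⟩ := hF
    obtain ⟨h, hh, hGh⟩ := hG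
    refine ⟨g + h, IntegrableOn.congr_fun (hg.add hh) (fun t _ => by simp only [Pi.add_apply]; ring)
      measurableSet_Ioi, fun t ht y hy => ?_⟩
    exact (abs_add_le _ _).trans (add_le_add (hFg t ht y hy) (hGh t ht y hy))
  | smul c F _ hF =>
    obtain ⟨g, hg, hFg⟩ := hF
    refine ⟨fun t => |c| * g t, IntegrableOn.congr_fun (hg.const_mul |c|)
      (fun t _ => by ring) measurableSet_Ioi, fun t ht y hy => ?_⟩
    rw [Pi.smul_apply, Pi.smul_apply, smul_eq_mul, abs_mul]
    exact mul_le_mul_of_nonneg_left (hFg t ht y hy) (abs_nonneg c)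

lemma IsKernelCombination.aestronglyMeasurable {G : ℝ → ℝ → ℝ} (hG : IsKernelCombination G)
    (n : ℕ) {y : ℝ} (hy : y ≠ 0) :
    AEStronglyMeasurable (fun t => besselSeries t * t ^ n * G t y)
      (volume.restrict (Set.Ioi 0)) := by
  obtain ⟨F, hF, hGF⟩ := hG
  simp_rw [hGF _ hy]
  exact ((measurable_besselSeries.mul (measurable_id.pow_const n)).mul
    (continuous_of_mem_kernelSpan hF y).measurable).aestronglyMeasurable

lemma IsKernelCombination.exists_integrableOn_bound {G : ℝ → ℝ → ℝ} (hG : IsKernelCombination G)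
    (n : ℕ) {x : ℝ} (hx : 0 < x) :
    ∃ g : ℝ → ℝ, IntegrableOn (fun t => besselSeries t * t ^ n * g t) (Set.Ioi 0) ∧
      ∀ᵐ t ∂(volume.restrict (Set.Ioi 0)), ∀ y ∈ Metric.ball x (x / 2),
        ‖besselSeries t * t ^ n * G t y‖ ≤ besselSeries t * t ^ n * g t := by
  obtain ⟨F, hF, hGF⟩ := hG
  obtain ⟨g, hg, hFg⟩ := exists_integrableOn_bound_of_mem_kernelSpan hF n hx
  refine ⟨g, hg, ?_⟩
  filter_upwards [ae_restrict_mem measurableSet_Ioi] with t (ht : 0 < t) y hy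
  have hweight : 0 ≤ besselSeries t * t ^ n :=
    mul_nonneg (besselSeries_nonneg ht.le) (by positivity)
  rw [norm_mul, Real.norm_of_nonneg hweight, Real.norm_eq_abs, hGF t (ne_zero_of_mem_ball_half hy)]
  exact mul_le_mul_of_nonneg_left (hFg t ht y hy) hweight

lemma hasDerivAt_integral_of_isKernelCombination {G G' : ℝ → ℝ → ℝ} (hG : IsKernelCombination G)
    (hG' : IsKernelCombination G') (hderiv : ∀ t y, y ≠ 0 → HasDerivAt (G t) (G' t y) y) (n : ℕ)
    {x : ℝ} (hx : 0 < x) :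
    HasDerivAt (fun y => ∫ t in Set.Ioi 0, besselSeries t * t ^ n * G t y)
      (∫ t in Set.Ioi 0, besselSeries t * t ^ n * G' t x) x := by
  obtain ⟨g, hg, hG'g⟩ := hG'.exists_integrableOn_bound n hx
  obtain ⟨h, hh, hGh⟩ := hG.exists_integrableOn_bound n hx
  have hball := Metric.ball_mem_nhds x (half_pos hx)
  refine (hasDerivAt_integral_of_dominated_loc_of_deriv_le
    (F := fun y t => besselSeries t * t ^ n * G t y)
    (F' := fun y t => besselSeries t * t ^ n * G' t y) hball
    ?_ ?_ (hG'.aestronglyMeasurable n hx.ne') hG'g hg ?_).2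
  · filter_upwards [hball] with y hy
    exact hG.aestronglyMeasurable n (ne_zero_of_mem_ball_half hy)
  · refine hh.mono' (hG.aestronglyMeasurable n hx.ne') ?_
    filter_upwards [hGh] with t ht
    exact ht x (Metric.mem_ball_self (half_pos hx))
  · filter_upwards with t y hy
    exact (hderiv t y (ne_zero_of_mem_ball_half hy)).const_mul _

lemma hasDerivAt_integral_iteratedDeriv_expKernel (n m : ℕ) {x : ℝ} (hx : 0 < x) :
    HasDerivAt
      (fun y => ∫ t in Set.Ioi 0, besselSeries t * t ^ n * iteratedDeriv m (expKernel n t) y)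
      (∫ t in Set.Ioi 0, besselSeries t * t ^ n * iteratedDeriv (m + 1) (expKernel n t) x) x :=
  hasDerivAt_integral_of_isKernelCombination (isKernelCombination_iteratedDeriv_expKernel n m)
    (isKernelCombination_iteratedDeriv_expKernel n (m + 1))
    (fun t _ hy => hasDerivAt_iteratedDeriv_expKernel n m t hy) n hx

lemma hasSum_choose_mul_pow_div_factorial (k : ℕ) (x : ℝ) :
    HasSum (fun N : ℕ => (N.choose k : ℝ) * x ^ N / N !) (x ^ k / k ! * exp x) := by
  rw [← hasSum_nat_add_iff' k, Finset.sum_eq_zero fun i hi => by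
    rw [Nat.choose_eq_zero_of_lt (Finset.mem_range.mp hi), Nat.cast_zero, zero_mul, zero_div],
    sub_zero, exp_eq_exp_ℝ]
  refine ((NormedSpace.expSeries_div_hasSum_exp x).mul_left (x ^ k / k !)).congr_fun fun i => ?_
  have hchoose : ((i + k).choose k : ℝ) ≠ 0 := by
    exact_mod_cast (Nat.choose_pos (Nat.le_add_left k i)).ne'
  rw [← Nat.add_choose_mul_factorial_mul_factorial i k]
  push_cast
  field_simp
  ring

lemma sum_choose_mul_choose_pred {n : ℕ} (hn : 1 ≤ n) (N : ℕ) :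
    ∑ k ∈ Icc 1 n, N.choose k * (n - 1).choose (k - 1) = (N + n - 1).choose n := by
  obtain ⟨n, rfl⟩ := Nat.exists_eq_add_of_le' hn
  rw [Nat.add_sub_cancel, Nat.add_sub_assoc hn, Nat.add_sub_cancel, Nat.add_choose_eq,
    Finset.Nat.sum_antidiagonal_eq_sum_range_succ (fun i j => N.choose i * n.choose j),
    Finset.sum_range_succ', Nat.sub_zero, Nat.choose_eq_zero_of_lt n.lt_succ_self, mul_zero,
    add_zero, show Icc 1 (n + 1) = Ico 1 (n + 2) by ext; simp; omega, Finset.sum_Ico_eq_sum_range]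
  refine Finset.sum_congr (by simp) fun i hi => ?_
  rw [Finset.mem_range] at hi
  rw [add_comm 1 i, Nat.add_sub_cancel, Nat.add_sub_add_right, Nat.choose_symm (by omega)]

lemma hasSum_lah_series {n : ℕ} (hn : 1 ≤ n) (x : ℝ) :
    HasSum (fun j : ℕ => n ! * (j + n).choose n / (j + 1)! * x ^ (j + 1))
      (exp x * ∑ k ∈ Icc 1 n, lah n k * x ^ k) := by
  have hterm : ∀ k ∈ Icc 1 n, HasSum (fun N : ℕ => lah n k * k ! * ((N.choose k : ℝ) * x ^ N / N !))
      (exp x * (lah n k * x ^ k)) := fun k _ => by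
    have h := (hasSum_choose_mul_pow_div_factorial k x).mul_left (lah n k * k !)
    rwa [show lah n k * k ! * (x ^ k / k ! * exp x) = exp x * (lah n k * x ^ k) by
      field_simp] at h
  have hsum := hasSum_sum hterm
  rw [← Finset.mul_sum, ← hasSum_nat_add_iff' 1] at hsum
  have hzero :
      ∑ i ∈ range 1, ∑ k ∈ Icc 1 n, lah n k * k ! * ((i.choose k : ℝ) * x ^ i / i !) = 0 := by
    rw [Finset.sum_range_one]
    refine Finset.sum_eq_zero fun k hk => ?_
    rw [Nat.choose_eq_zero_of_lt (by simp at hk; omega)]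
    simp
  rw [hzero, sub_zero] at hsum
  refine hsum.congr_fun fun j => ?_
  have hchoose := sum_choose_mul_choose_pred hn (j + 1)
  rw [show j + 1 + n - 1 = j + n by omega] at hchoose
  rw [← hchoose, Nat.cast_sum, Finset.mul_sum, Finset.sum_div, Finset.sum_mul]
  refine Finset.sum_congr rfl fun k _ => ?_
  unfold lah
  push_cast
  field_simp

lemma integral_besselSeries_mul_expKernel {n : ℕ} (hn : 1 ≤ n) {x : ℝ} (hx : 0 < x) :
    ∫ t in Set.Ioi 0, besselSeries t * t ^ n * expKernel n t x
      = ∑ k ∈ Icc 1 n, lah n k * x ^ k := by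
  have hx0 : x ≠ 0 := hx.ne'
  set u : ℕ → ℝ → ℝ := fun j t =>
    exp (-x) / (x ^ n * ((j ! : ℝ) * (j + 1)!)) * (t ^ (j + n) * exp (-(x⁻¹ * t))) with hu
  have hexpand : ∀ t, besselSeries t * t ^ n * expKernel n t x = ∑' j, u j t := fun t => by
    rw [besselSeries, ← tsum_mul_right, ← tsum_mul_right]
    refine tsum_congr fun j => ?_
    rw [expKernel, show -x - t / x = -x + -(x⁻¹ * t) by ring, exp_add]
    simp only [hu, pow_add]
    field_simp
  have hint : ∀ j, IntegrableOn (u j) (Set.Ioi 0) := fun j =>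
    (integrableOn_pow_mul_exp_neg_mul_Ioi (j + n) (inv_pos.mpr hx)).const_mul _
  have hintegral : ∀ j, ∫ t in Set.Ioi 0, u j t
      = exp (-x) * (n ! * (j + n).choose n / (j + 1)! * x ^ (j + 1)) := fun j => by
    rw [integral_const_mul, integral_pow_mul_exp_neg_mul_Ioi _ (inv_pos.mpr hx),
      inv_pow, div_inv_eq_mul, ← Nat.add_choose_mul_factorial_mul_factorial j n]
    push_cast
    field_simp
    ring
  have hnorm : ∀ j, ∫ t in Set.Ioi 0, ‖u j t‖ = ∫ t in Set.Ioi 0, u j t := fun j =>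
    setIntegral_congr_fun measurableSet_Ioi fun t (ht : 0 < t) =>
      Real.norm_of_nonneg (by positivity)
  have hseries := (hasSum_lah_series hn x).mul_left (exp (-x))
  simp_rw [← hintegral] at hseries
  have hswap := hasSum_integral_of_summable_integral_norm hint
    (by simp_rw [hnorm]; exact hseries.summable)
  rw [funext hexpand, hswap.unique hseries, ← mul_assoc, ← exp_add, neg_add_cancel, exp_zero,
    one_mul]

lemma eqOn_iteratedDeriv_of_hasDerivAt {𝕜 E : Type*} [NontriviallyNormedField 𝕜]
    [NormedAddCommGroup E] [NormedSpace 𝕜 E] {f : ℕ → 𝕜 → E} {U : Set 𝕜} (hU : IsOpen U)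
    (hf : ∀ m, ∀ y ∈ U, HasDerivAt (f m) (f (m + 1) y) y) (m : ℕ) :
    Set.EqOn (iteratedDeriv m (f 0)) (f m) U := by
  induction m with
  | zero => exact fun y _ => rfl
  | succ m ih =>
    intro y hy
    rw [iteratedDeriv_succ, (Filter.eventuallyEq_of_mem (hU.mem_nhds hy) ih).deriv_eq,
      (hf m y hy).deriv]

lemma iteratedDeriv_sum_mul_pow {𝕜 : Type*} [NontriviallyNormedField 𝕜] (s : Finset ℕ)
    (c : ℕ → 𝕜) (m : ℕ) (x : 𝕜) :
    iteratedDeriv m (fun y => ∑ k ∈ s, c k * y ^ k) x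
      = ∑ k ∈ s, c k * k.descFactorial m * x ^ (k - m) := by
  rw [iteratedDeriv_fun_sum fun k _ => by fun_prop]
  simp only [iteratedDeriv_const_mul_field, iteratedDeriv_pow, mul_assoc]

theorem lah_sum_deriv_integral_repr (m n : ℕ) (hm : 1 ≤ m) (hmn : m ≤ n)
    (x : ℝ) (hx : 0 < x) :
    ∑ k ∈ Finset.Icc m n,
        lah n k * ((Nat.factorial k : ℝ) / (Nat.factorial (k - m))) * x ^ (k - m)
      = ∫ t in Set.Ioi (0 : ℝ),
          (∑' j : ℕ, t ^ j / ((Nat.factorial j : ℝ) * (Nat.factorial (j + 1))))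
            * t ^ n *
            iteratedDeriv m (fun y : ℝ => Real.exp (-y - t / y) / y ^ n) x := by
  have hn : 1 ≤ n := hm.trans hmn
  set I : ℕ → ℝ → ℝ := fun m y =>
    ∫ t in Set.Ioi 0, besselSeries t * t ^ n * iteratedDeriv m (expKernel n t) y
  have hI : Set.EqOn (iteratedDeriv m (I 0)) (I m) (Set.Ioi 0) :=
    eqOn_iteratedDeriv_of_hasDerivAt isOpen_Ioi
      (fun m y hy => hasDerivAt_integral_iteratedDeriv_expKernel n m hy) m
  have hI₀ : I 0 =ᶠ[𝓝 x] fun y => ∑ k ∈ Icc 1 n, lah n k * y ^ k :=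
    Filter.eventually_of_mem (isOpen_Ioi.mem_nhds hx) fun y hy =>
      integral_besselSeries_mul_expKernel hn hy
  have hfactorial : ∀ k ∈ Icc m n, (k ! : ℝ) / (k - m)! = k.descFactorial m := fun k hk => by
    rw [div_eq_iff (by positivity), mul_comm, ← Nat.cast_mul,
      Nat.factorial_mul_descFactorial (Finset.mem_Icc.mp hk).1]
  have hvanish : ∀ k ∈ Icc 1 n, k ∉ Icc m n → lah n k * k.descFactorial m * x ^ (k - m) = 0 :=
    fun k hk hkm => by
      rw [Nat.descFactorial_eq_zero_iff_lt.mpr (by simp at hk hkm; omega)]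
      simp
  calc _ = ∑ k ∈ Icc 1 n, lah n k * k.descFactorial m * x ^ (k - m) := by
        rw [Finset.sum_congr rfl fun k hk => by rw [hfactorial k hk]]
        exact Finset.sum_subset (Finset.Icc_subset_Icc_left hm) hvanish
    _ = iteratedDeriv m (I 0) x := by rw [hI₀.iteratedDeriv_eq, iteratedDeriv_sum_mul_pow]
    _ = I m x := hI hx
end
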